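/- arXiv:2605.22485 — 4 statements merged into one kernel-verified Lean document; each statement's English description precedes it below -/
import Mathlib

section
/- Let k ≥ 1 and χ_k(ζ) = 1 − (1−ζ)^k. Then Re(1 + μ·χ_k(ζ)) > 0 for all complex ζ with |ζ| ≤ 1 and all μ ∈ [0, ω] if and only if ω < 1/(2^k − 1). Moreover Re(1 + μ·χ_k(ζ)) = 0 with |ζ| ≤ 1, μ ∈ [0,ω], and ω = 1/(2^k−1) occurs precisely when μ = 1/(2^k−1) and ζ = −1. -/
lemma re_pow_le_aux (k : ℕ) (ζ : ℂ) (hζ : ‖ζ‖ ≤ 1) :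
    ((1 - ζ) ^ k).re ≤ 2 ^ k := by
  calc ((1 - ζ) ^ k).re ≤ ‖(1 - ζ) ^ k‖ := Complex.re_le_norm _
    _ = ‖1 - ζ‖ ^ k := by rw [norm_pow]
    _ ≤ 2 ^ k := by
        apply pow_le_pow_left₀ (norm_nonneg _)
        calc ‖1 - ζ‖ ≤ ‖(1:ℂ)‖ + ‖ζ‖ := by
              simpa [sub_eq_add_neg] using norm_add_le 1 (-ζ)
          _ ≤ 2 := by simp only [norm_one]; linarith

lemma re_pow_eq_aux (k : ℕ) (hk : 1 ≤ k) (ζ : ℂ) (hζ : ‖ζ‖ ≤ 1)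
    (h : ((1 - ζ) ^ k).re = 2 ^ k) : ζ = -1 := by
  have hab : ‖1 - ζ‖ ≤ 2 := by
    calc ‖1 - ζ‖ ≤ ‖(1:ℂ)‖ + ‖ζ‖ := by
          simpa [sub_eq_add_neg] using norm_add_le 1 (-ζ)
      _ ≤ 2 := by simp only [norm_one]; linarith
  have h2 : ‖1 - ζ‖ = 2 := by
    by_contra hne
    have hlt : ‖1 - ζ‖ < 2 := lt_of_le_of_ne hab hne
    have h3 : ‖(1 - ζ) ^ k‖ < 2 ^ k := by
      rw [norm_pow]
      exact pow_lt_pow_left₀ hlt (norm_nonneg _) (by omega)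
    have h4 := Complex.re_le_norm ((1 - ζ) ^ k)
    linarith
  have hn : Complex.normSq (1 - ζ) = 4 := by
    have := Complex.sq_norm (1 - ζ)
    rw [h2] at this; nlinarith
  have hnζ : Complex.normSq ζ ≤ 1 := by
    have := Complex.sq_norm ζ
    nlinarith [norm_nonneg ζ]
  rw [Complex.normSq_apply] at hn hnζ
  simp only [Complex.sub_re, Complex.sub_im, Complex.one_re, Complex.one_im] at hn
  apply Complex.ext <;> simp <;> nlinarith

/-- Weak coupling characterization: Re(1 + μ χ_k(ζ)) > 0 on the closed unit disc for
all μ ∈ [0,ω] iff ω < 1/(2^k - 1); at the boundary ω = 1/(2^k-1), vanishing occurs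
precisely at μ = 1/(2^k-1), ζ = -1. -/
theorem weak_coupling_characterization (k : ℕ) (hk : 1 ≤ k) (ω : ℝ) (hω : 0 ≤ ω) :
    ((∀ ζ : ℂ, ‖ζ‖ ≤ 1 → ∀ μ : ℝ, μ ∈ Set.Icc 0 ω →
        0 < ((1 : ℂ) + (μ : ℂ) * (1 - (1 - ζ) ^ k)).re)
      ↔ ω < 1 / ((2 : ℝ) ^ k - 1)) ∧
    (ω = 1 / ((2 : ℝ) ^ k - 1) →
      ∀ ζ : ℂ, ‖ζ‖ ≤ 1 → ∀ μ : ℝ, μ ∈ Set.Icc 0 ω →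
        (((1 : ℂ) + (μ : ℂ) * (1 - (1 - ζ) ^ k)).re = 0 ↔
          μ = 1 / ((2 : ℝ) ^ k - 1) ∧ ζ = -1)) := by
  have hA : (1:ℝ) ≤ (2:ℝ) ^ k - 1 := by
    have h1 : (2:ℝ) ^ 1 ≤ (2:ℝ) ^ k := pow_le_pow_right₀ one_le_two hk
    simp at h1; linarith
  have hApos : (0:ℝ) < (2:ℝ) ^ k - 1 := by linarith
  have key : ∀ (ζ : ℂ) (μ : ℝ), ((1 : ℂ) + (μ : ℂ) * (1 - (1 - ζ) ^ k)).re
      = 1 + μ * (1 - ((1 - ζ) ^ k).re) := by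
    intro ζ μ
    simp [Complex.add_re, Complex.mul_re]
  have hreneg1 : ((1 - (-1:ℂ)) ^ k).re = 2 ^ k := by
    rw [show (1 - (-1:ℂ)) = ((2:ℝ):ℂ) by norm_num, ← Complex.ofReal_pow, Complex.ofReal_re]
  constructor
  · constructor
    · intro h
      have h0 := h (-1) (by norm_num) ω ⟨hω, le_refl ω⟩
      rw [key, hreneg1] at h0
      rw [lt_div_iff₀ hApos]
      nlinarith
    · intro hlt ζ hζ μ hμ
      obtain ⟨hμ0, hμω⟩ := hμ
      rw [key]
      have h1 := re_pow_le_aux k ζ hζ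
      have h2 : ω * ((2:ℝ) ^ k - 1) < 1 := by
        rw [lt_div_iff₀ hApos] at hlt; linarith
      nlinarith
  · intro hωeq ζ hζ μ hμ
    obtain ⟨hμ0, hμω⟩ := hμ
    rw [key]
    constructor
    · intro hzero
      have h1 := re_pow_le_aux k ζ hζ
      have hμub : μ ≤ 1 / ((2:ℝ) ^ k - 1) := hωeq ▸ hμω
      have hμA : μ * ((2:ℝ) ^ k - 1) ≤ 1 := by
        rw [le_div_iff₀ hApos] at hμub; linarith
      -- from hzero: μ * r = 1 + μ; with r ≤ 2^k get 1 ≤ μ(2^k-1)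
      have hge : 1 ≤ μ * ((2:ℝ) ^ k - 1) := by nlinarith
      have hμeq : μ = 1 / ((2:ℝ) ^ k - 1) := by
        rw [eq_div_iff (ne_of_gt hApos)]; linarith
      have hμpos : 0 < μ := by
        rw [hμeq]; positivity
      have hreq : ((1 - ζ) ^ k).re = 2 ^ k := by nlinarith
      exact ⟨hμeq, re_pow_eq_aux k hk ζ hζ hreq⟩
    · rintro ⟨hμeq, hζeq⟩
      rw [hζeq, hreneg1, hμeq]
      field_simp
      ring
end

section
/- Let ω ≥ 0 and define ρ_US(L) = ω·max(L, 1−L)/(1 + Lω) for L ≥ 0. Then: (i) ρ_US(L) < 1 for all L ≥ 1/2; (ii) for 0 ≤ L < 1/2, ρ_US(L) < 1 if and only if ω < 1/(1−2L); (iii) the minimum of ρ_US over L ≥ 0 is attained at L = 1/2 with value ω/(2+ω). -/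
/-- Properties of the undrained-split contraction rate
ρ_US(L) = ω max(L, 1-L)/(1 + Lω). -/
theorem undrained_split_contraction_rate (ω : ℝ) (hω : 0 ≤ ω) :
    let ρ : ℝ → ℝ := fun L => ω * max L (1 - L) / (1 + L * ω)
    (∀ L : ℝ, 1 / 2 ≤ L → ρ L < 1) ∧
    (∀ L : ℝ, 0 ≤ L → L < 1 / 2 → (ρ L < 1 ↔ ω < 1 / (1 - 2 * L))) ∧
    (∀ L : ℝ, 0 ≤ L → ρ (1 / 2) ≤ ρ L) ∧
    ρ (1 / 2) = ω / (2 + ω) := by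
  intro ρ
  have hhalf : ρ (1 / 2) = ω / (2 + ω) := by
    show ω * max (1/2 : ℝ) (1 - 1/2) / (1 + 1/2 * ω) = ω / (2 + ω)
    have : max (1/2 : ℝ) (1 - 1/2) = 1/2 := by norm_num
    rw [this]
    rw [div_eq_div_iff (by nlinarith) (by nlinarith)]
    ring
  refine ⟨?_, ?_, ?_, hhalf⟩
  · intro L hL
    have hmax : max L (1 - L) = L := max_eq_left (by linarith)
    show ω * max L (1 - L) / (1 + L * ω) < 1
    rw [hmax, div_lt_one (by nlinarith)]
    nlinarith
  · intro L hL0 hL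
    have hmax : max L (1 - L) = 1 - L := max_eq_right (by linarith)
    have hden : (0:ℝ) < 1 + L * ω := by nlinarith
    have h2L : (0:ℝ) < 1 - 2 * L := by linarith
    show ω * max L (1 - L) / (1 + L * ω) < 1 ↔ ω < 1 / (1 - 2 * L)
    rw [hmax, div_lt_one hden, lt_div_iff₀ h2L]
    constructor <;> intro h <;> nlinarith
  · intro L hL0
    rw [hhalf]
    show ω / (2 + ω) ≤ ω * max L (1 - L) / (1 + L * ω)
    have hden : (0:ℝ) < 1 + L * ω := by nlinarith
    have h2ω : (0:ℝ) < 2 + ω := by linarith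
    rw [div_le_div_iff₀ h2ω hden]
    rcases le_total (1 - L) L with h | h
    · rw [max_eq_left h]; nlinarith
    · rw [max_eq_right h]
      nlinarith [mul_nonneg hω (mul_nonneg (by linarith : (0:ℝ) ≤ 1 + ω) (by linarith : (0:ℝ) ≤ 1 - 2 * L))]
end

section
/- Let A be a real s×s matrix and β ∈ ℝ^s with all entries positive, such that diag(β)A + Aᵀdiag(β) − ββᵀ is positive semidefinite. Then for every symmetric positive semidefinite s×s matrix B, the trace tr(diag(β)·A·B) is nonnegative. -/
open Matrix

lemma psd_trace_nonneg {s : ℕ} {M : Matrix (Fin s) (Fin s) ℝ} (hM : M.PosSemidef) :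
    0 ≤ M.trace := by
  rw [Matrix.trace]
  apply Finset.sum_nonneg
  intro i _
  exact hM.diag_nonneg (i := i)

open scoped MatrixOrder in
lemma psd_mul_trace_nonneg {s : ℕ} {M B : Matrix (Fin s) (Fin s) ℝ}
    (hM : M.PosSemidef) (hB : B.PosSemidef) : 0 ≤ (M * B).trace := by
  have h1 : M * B = M * (CFC.sqrt B * CFC.sqrt B) := by rw [CFC.sqrt_mul_sqrt_self B hB.nonneg]
  rw [h1, ← Matrix.mul_assoc, Matrix.trace_mul_comm]
  have : (CFC.sqrt B * (M * CFC.sqrt B)) = (CFC.sqrt B)ᴴ * M * CFC.sqrt B := by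
    rw [(CFC.sqrt_nonneg B).posSemidef.1, Matrix.mul_assoc]
  rw [this]
  exact psd_trace_nonneg (hM.conjTranspose_mul_mul_same (CFC.sqrt B))

lemma vecMulVec_psd {s : ℕ} (β : Fin s → ℝ) : (vecMulVec β β).PosSemidef := by
  rw [vecMulVec_eq (ι := Unit)]
  have : (replicateRow Unit β) = (replicateCol Unit β)ᴴ := by
    ext i j; simp [Matrix.replicateRow, Matrix.replicateCol]
  rw [this]
  exact posSemidef_self_mul_conjTranspose _

/-- Algebraic stability implies nonnegativity of tr(diag(β)·A·B) for PSD B. -/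
theorem algebraic_stability_trace_nonneg {s : ℕ} (β : Fin s → ℝ) (hβ : ∀ i, 0 < β i)
    (A : Matrix (Fin s) (Fin s) ℝ)
    (halg : (diagonal β * A + Aᵀ * diagonal β - vecMulVec β β).PosSemidef)
    (B : Matrix (Fin s) (Fin s) ℝ) (hB : B.PosSemidef) :
    0 ≤ (diagonal β * A * B).trace := by
  set M := diagonal β * A with hMdef
  have hsym : Bᵀ = B := hB.1
  have hMt : (M * B).trace = (Mᵀ * B).trace := by
    conv_lhs => rw [← Matrix.trace_transpose, Matrix.transpose_mul, Matrix.trace_mul_comm, hsym]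
  have h2 : (2 : ℝ) * (M * B).trace = ((M + Mᵀ) * B).trace := by
    rw [Matrix.add_mul, Matrix.trace_add, ← hMt]; ring
  have hMMt : M + Mᵀ = (diagonal β * A + Aᵀ * diagonal β - vecMulVec β β) + vecMulVec β β := by
    rw [hMdef]; ext i j
    simp [Matrix.transpose_mul, Matrix.diagonal_transpose]
  have htr : 0 ≤ ((M + Mᵀ) * B).trace := by
    rw [hMMt, Matrix.add_mul, Matrix.trace_add]
    exact add_nonneg (psd_mul_trace_nonneg halg hB) (psd_mul_trace_nonneg (vecMulVec_psd β) hB)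
  linarith
end

section
/- Let X be a complex Hilbert space and let P(ζ) = Σ_{n=1}^∞ P^n ζ^n and R(ζ) be X-valued functions analytic on a neighborhood of the closed unit disc, satisfying for two positive constants c_b, c_0/τ the pointwise inequality c_b‖P(ζ)‖² + (c_0/τ)‖P(ζ)‖_c² ≤ Re⟨R(ζ), P(ζ)⟩ for all |ζ| = 1 (where ‖·‖_c is a second norm dominated by duality). Then (c_b/2)Σ_{n=1}^∞ ‖P^n‖² + (c_0/τ)Σ_{n=1}^∞ ‖P^n‖_c² ≤ (1/(2c_b))·(1/2π)∫_0^{2π} ‖R(e^{iθ})‖_*² dθ, where ‖·‖_* is the dual norm of ‖·‖. -/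
open MeasureTheory Filter Topology Finset

theorem circle_inner_integral {X : Type*} [NormedAddCommGroup X] [InnerProductSpace ℂ X]
    (x y : X) (n m : ℕ) :
    (∫ θ in (0:ℝ)..(2*Real.pi),
        (inner ℂ (Complex.exp (θ*Complex.I) ^ (n+1) • x)
               (Complex.exp (θ*Complex.I) ^ (m+1) • y) : ℂ))
      = if n = m then ((2*Real.pi : ℝ):ℂ) * (inner ℂ x y : ℂ) else 0 := by
  have h1 : ∀ θ : ℝ, (inner ℂ (Complex.exp (θ*Complex.I) ^ (n+1) • x)
               (Complex.exp (θ*Complex.I) ^ (m+1) • y) : ℂ)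
      = Complex.exp ((((m:ℂ)-(n:ℂ))*Complex.I)*θ) * (inner ℂ x y : ℂ) := by
    intro θ
    rw [inner_smul_left, inner_smul_right]
    rw [map_pow, ← Complex.exp_conj, map_mul, Complex.conj_ofReal, Complex.conj_I]
    rw [← Complex.exp_nat_mul, ← Complex.exp_nat_mul, ← mul_assoc, ← Complex.exp_add]
    congr 2
    push_cast
    ring
  simp_rw [h1]
  rw [intervalIntegral.integral_mul_const]
  by_cases h : n = m
  · subst h
    simp
  · rw [if_neg h]
    have hc : (((m:ℂ)-(n:ℂ))*Complex.I) ≠ 0 := by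
      refine mul_ne_zero (sub_ne_zero.2 ?_) Complex.I_ne_zero
      exact_mod_cast fun hh => h (Nat.cast_injective hh).symm
    rw [integral_exp_mul_complex hc]
    have e1 : (((m:ℂ)-(n:ℂ))*Complex.I) * ((2*Real.pi : ℝ):ℂ)
        = ((m - n : ℤ) : ℂ) * (2*Real.pi*Complex.I) := by push_cast; ring
    rw [e1, Complex.exp_int_mul_two_pi_mul_I]
    simp

theorem boundary_parseval {X : Type*} [NormedAddCommGroup X]
    [InnerProductSpace ℂ X] [CompleteSpace X]
    (Q : ℕ → X) (F : ℝ → X) (hQ : Summable fun n => ‖Q n‖ ^ 2)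
    (hF : ∀ θ : ℝ, HasSum (fun n : ℕ => Complex.exp (θ * Complex.I) ^ (n + 1) • Q n) (F θ)) :
    MeasureTheory.IntegrableOn (fun θ => ‖F θ‖ ^ 2) (Set.Ioc 0 (2 * Real.pi)) volume ∧
      (∫ θ in Set.Ioc 0 (2 * Real.pi), ‖F θ‖ ^ 2) = (2 * Real.pi) * ∑' n, ‖Q n‖ ^ 2 := by
  haveI : Fact ((1:ENNReal) ≤ 2) := ⟨one_le_two⟩
  set μ : Measure ℝ := volume.restrict (Set.Ioc 0 (2 * Real.pi)) with hμ
  haveI : IsFiniteMeasure μ := by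
    constructor
    rw [hμ, Measure.restrict_apply MeasurableSet.univ, Set.univ_inter, Real.volume_Ioc]
    exact ENNReal.ofReal_lt_top
  set f : ℕ → ℝ → X := fun n θ => Complex.exp (θ * Complex.I) ^ (n + 1) • Q n with hf
  have hf_cont : ∀ n, Continuous (f n) := by
    intro n
    exact ((Complex.continuous_exp.comp
      (Complex.continuous_ofReal.mul continuous_const)).pow _).smul continuous_const
  have hf_norm : ∀ n θ, ‖f n θ‖ = ‖Q n‖ := by
    intro n θ
    simp [hf, norm_smul, Complex.norm_exp_ofReal_mul_I]
  have hmem : ∀ n, MemLp (f n) 2 μ := fun n =>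
    MemLp.of_bound (hf_cont n).aestronglyMeasurable ‖Q n‖
      (ae_of_all _ fun θ => (hf_norm n θ).le)
  set v : ℕ → Lp X 2 μ := fun n => (hmem n).toLp (f n) with hv
  -- inner products
  have hinner : ∀ n m : ℕ, (inner ℂ (v n) (v m) : ℂ)
      = if n = m then ((2*Real.pi : ℝ):ℂ) * (inner ℂ (Q n) (Q m) : ℂ) else 0 := by
    intro n m
    rw [MeasureTheory.L2.inner_def]
    have := MeasureTheory.integral_congr_ae
      (μ := μ) (f := fun a => (inner ℂ (v n a) (v m a) : ℂ))
      (g := fun a => (inner ℂ (f n a) (f m a) : ℂ)) ?_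
    · rw [this, hμ, ← intervalIntegral.integral_of_le (by positivity)]
      exact circle_inner_integral (Q n) (Q m) n m
    · filter_upwards [ (hmem n).coeFn_toLp, (hmem m).coeFn_toLp] with a h1 h2
      rw [hv]; simp only []
      rw [h1, h2]
  have hnormv : ∀ n, ‖v n‖ ^ 2 = (2*Real.pi) * ‖Q n‖ ^ 2 := by
    intro n
    rw [← inner_self_eq_norm_sq (𝕜 := ℂ), hinner n n, if_pos rfl]
    simp [← inner_self_eq_norm_sq (𝕜 := ℂ) (Q n)]
  -- orthogonality: finset sums
  have hsum_sq : ∀ s : Finset ℕ, ‖∑ i ∈ s, v i‖ ^ 2 = ∑ i ∈ s, (2*Real.pi) * ‖Q i‖ ^ 2 := by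
    intro s
    have : (inner ℂ (∑ i ∈ s, v i) (∑ j ∈ s, v j) : ℂ) = ∑ i ∈ s, (inner ℂ (v i) (v i) : ℂ) := by
      rw [sum_inner]
      refine Finset.sum_congr rfl fun i hi => ?_
      rw [inner_sum]
      refine Finset.sum_eq_single_of_mem i hi fun j hj hne => ?_
      rw [hinner i j, if_neg (fun hh => hne hh.symm)]
    rw [← inner_self_eq_norm_sq (𝕜 := ℂ), RCLike.re_to_complex, this, Complex.re_sum]
    exact Finset.sum_congr rfl fun i _ => by
      rw [← RCLike.re_to_complex, inner_self_eq_norm_sq (𝕜 := ℂ), hnormv]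
  set S : ℕ → Lp X 2 μ := fun N => ∑ i ∈ Finset.range N, v i with hS
  have hQ2 : Summable fun n => (2*Real.pi) * ‖Q n‖ ^ 2 := hQ.mul_left _
  set T : ℝ := ∑' n, (2*Real.pi) * ‖Q n‖ ^ 2 with hT
  set b : ℕ → ℝ := fun N => T - ∑ i ∈ Finset.range N, (2*Real.pi) * ‖Q i‖ ^ 2 with hb
  have hb0 : ∀ N, 0 ≤ b N := fun N =>
    sub_nonneg.2 (Summable.sum_le_tsum _ (fun i _ => by positivity) hQ2)
  have hbt : Tendsto b atTop (𝓝 0) := by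
    have h := hQ2.hasSum.tendsto_sum_nat
    have := (tendsto_const_nhds (x := T) (f := atTop (α := ℕ))).sub h
    simpa [hb, ← hT] using this
  have hdist : ∀ N n m, N ≤ n → N ≤ m → dist (S n) (S m) ≤ Real.sqrt (b N) := by
    intro N n m hn hm
    wlog hnm : n ≤ m generalizing n m
    · rw [dist_comm]; exact this m n hm hn (le_of_not_ge hnm)
    have key : dist (S n) (S m) ^ 2 ≤ b N := by
      have e : ∑ i ∈ Finset.Ico n m, v i = S m - S n := Finset.sum_Ico_eq_sub _ hnm
      have e2 : dist (S n) (S m) = ‖∑ i ∈ Finset.Ico n m, v i‖ := by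
        rw [dist_eq_norm, ← norm_neg, neg_sub, e]
      rw [e2, hsum_sq]
      have hdisj : Disjoint (Finset.range N) (Finset.Ico n m) := by
        rw [Finset.disjoint_left]
        intro i hi hi2
        rw [Finset.mem_range] at hi
        rw [Finset.mem_Ico] at hi2
        omega
      have hle : ∑ i ∈ Finset.range N ∪ Finset.Ico n m, (2*Real.pi) * ‖Q i‖ ^ 2 ≤ T :=
        Summable.sum_le_tsum _ (fun i _ => by positivity) hQ2
      rw [Finset.sum_union hdisj] at hle
      rw [hb]
      simp only []
      linarith
    nlinarith [Real.sq_sqrt (hb0 N), Real.sqrt_nonneg (b N), dist_nonneg (x := S n) (y := S m)]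
  have hcauchy : CauchySeq S :=
    cauchySeq_of_le_tendsto_0 (fun N => Real.sqrt (b N))
      (fun n m N hn hm => hdist N n m hn hm)
      (by simpa using hbt.sqrt)
  obtain ⟨g, hg⟩ := cauchySeq_tendsto_of_complete hcauchy
  have hnormg : ‖g‖ ^ 2 = T := by
    refine tendsto_nhds_unique (hg.norm.pow 2) ?_
    simpa [hS, hsum_sq, ← hT] using hQ2.hasSum.tendsto_sum_nat
  have hScoe : ∀ N : ℕ, (⇑(S N) : ℝ → X) =ᵐ[μ] fun θ => ∑ i ∈ Finset.range N, f i θ := by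
    intro N
    induction N with
    | zero =>
      have : S 0 = 0 := by rw [hS]; simp
      rw [this]
      filter_upwards [Lp.coeFn_zero X 2 μ] with a h1
      simpa using h1
    | succ N ih =>
      have hstep : S (N+1) = S N + v N := by rw [hS]; simp [Finset.sum_range_succ]
      rw [hstep]
      filter_upwards [Lp.coeFn_add (S N) (v N), ih, (hmem N).coeFn_toLp] with a h1 h2 h3
      simp only [h1, Pi.add_apply, h2, Finset.sum_range_succ]
      rw [h3]
  have hae : ∀ᵐ θ ∂μ, ∀ N, (S N) θ = ∑ i ∈ Finset.range N, f i θ := ae_all_iff.2 hScoe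
  obtain ⟨ns, hns_mono, hns⟩ := (tendstoInMeasure_of_tendsto_Lp hg).exists_seq_tendsto_ae
  have hgF : (⇑g : ℝ → X) =ᵐ[μ] F := by
    filter_upwards [hae, hns] with θ h1 h2
    have h3 : Tendsto (fun i => ∑ n ∈ Finset.range (ns i), f n θ) atTop (𝓝 (F θ)) :=
      ((hF θ).tendsto_sum_nat).comp (hns_mono.tendsto_atTop)
    have h4 : Tendsto (fun i => ∑ n ∈ Finset.range (ns i), f n θ) atTop (𝓝 (g θ)) := by
      have : (fun i => ∑ n ∈ Finset.range (ns i), f n θ) = fun i => (S (ns i)) θ := by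
        funext i
        rw [h1 (ns i)]
      rw [this]
      exact h2
    exact tendsto_nhds_unique h4 h3
  have hmemF : MemLp F 2 μ := (Lp.memLp g).ae_eq hgF
  have hint : Integrable (fun θ => ‖F θ‖ ^ 2) μ := by
    have h := hmemF.integrable_norm_rpow (by norm_num) (by norm_num)
    have e : ∀ θ : ℝ, ‖F θ‖ ^ ((2:ENNReal).toReal) = ‖F θ‖ ^ 2 := by
      intro θ
      rw [ENNReal.toReal_ofNat]
      rw [show ((2:ℝ)) = ((2:ℕ):ℝ) by norm_num, Real.rpow_natCast]
    simpa [e] using h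
  have hIeq : (∫ θ, ‖F θ‖ ^ 2 ∂μ) = T := by
    have e1 : (∫ θ, ‖F θ‖ ^ 2 ∂μ) = ∫ θ, ‖g θ‖ ^ 2 ∂μ := by
      refine integral_congr_ae ?_
      filter_upwards [hgF] with θ h
      rw [h]
    have e2 : ‖g‖ ^ 2 = ∫ θ, ‖g θ‖ ^ 2 ∂μ := by
      rw [← inner_self_eq_norm_sq (𝕜 := ℂ), MeasureTheory.L2.inner_def,
        ← integral_re (MeasureTheory.L2.integrable_inner g g)]
      refine integral_congr_ae (ae_of_all _ fun θ => ?_)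
      exact inner_self_eq_norm_sq (𝕜 := ℂ) _
    rw [e1, ← e2, hnormg]
  exact ⟨hint, by rw [hIeq, hT, tsum_mul_left]⟩



/-- Frequency-domain coercivity transferred to ℓ²-in-time stability via Parseval:
if c_b‖P(ζ)‖² + (c_0/τ)‖C P(ζ)‖² ≤ Re⟨R(ζ), P(ζ)⟩ on |ζ| = 1, then
(c_b/2)Σ‖Pⁿ‖² + (c_0/τ)Σ‖C Pⁿ‖² ≤ (1/(2c_b))·(1/2π)∫‖R(e^{iθ})‖² dθ. -/
theorem parseval_stability_estimate {X : Type*} [NormedAddCommGroup X]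
    [InnerProductSpace ℂ X] [CompleteSpace X]
    (Pc : ℕ → X) (P R : ℂ → X) (Cop : X →L[ℂ] X)
    (cb c0 τ : ℝ) (hcb : 0 < cb) (hc0 : 0 < c0) (hτ : 0 < τ)
    (hPsum : Summable fun n => ‖Pc n‖ ^ 2)
    (hPser : ∀ ζ : ℂ, ‖ζ‖ ≤ 1 →
      HasSum (fun n : ℕ => ζ ^ (n + 1) • Pc n) (P ζ))
    (hRcont : Continuous R)
    (hcoer : ∀ ζ : ℂ, ‖ζ‖ = 1 →
      cb * ‖P ζ‖ ^ 2 + (c0 / τ) * ‖Cop (P ζ)‖ ^ 2 ≤ (inner ℂ (R ζ) (P ζ) : ℂ).re) :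
    (cb / 2) * ∑' n, ‖Pc n‖ ^ 2 + (c0 / τ) * ∑' n, ‖Cop (Pc n)‖ ^ 2 ≤
      (1 / (2 * cb)) * ((1 / (2 * Real.pi)) *
        ∫ θ in (0 : ℝ)..(2 * Real.pi), ‖R (Complex.exp (θ * Complex.I))‖ ^ 2) := by
  have hpi : (0:ℝ) < 2 * Real.pi := by positivity
  set F1 : ℝ → X := fun θ => P (Complex.exp (θ * Complex.I)) with hF1
  set F2 : ℝ → X := fun θ => Cop (P (Complex.exp (θ * Complex.I))) with hF2
  have habs : ∀ θ : ℝ, ‖Complex.exp (θ * Complex.I)‖ = 1 := fun θ =>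
    Complex.norm_exp_ofReal_mul_I θ
  have h1 := boundary_parseval Pc F1 hPsum (fun θ => hPser _ (le_of_eq (habs θ)))
  have hQ2sum : Summable fun n => ‖Cop (Pc n)‖ ^ 2 := by
    refine Summable.of_nonneg_of_le (fun n => by positivity) (fun n => ?_)
      (hPsum.mul_left (‖Cop‖^2))
    have h := Cop.le_opNorm (Pc n)
    nlinarith [norm_nonneg (Pc n), norm_nonneg (Cop (Pc n)), norm_nonneg Cop]
  have hF2ser : ∀ θ : ℝ, HasSum
      (fun n : ℕ => Complex.exp (θ*Complex.I) ^ (n+1) • Cop (Pc n)) (F2 θ) := by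
    intro θ
    have := (hPser _ (le_of_eq (habs θ))).mapL Cop
    simpa using this
  have h2 := boundary_parseval (fun n => Cop (Pc n)) F2 hQ2sum hF2ser
  have hpt : ∀ θ : ℝ, (cb/2) * ‖F1 θ‖^2 + (c0/τ) * ‖F2 θ‖^2
      ≤ (1/(2*cb)) * ‖R (Complex.exp (θ*Complex.I))‖^2 := by
    intro θ
    have hc := hcoer _ (habs θ)
    set r := ‖R (Complex.exp (θ*Complex.I))‖
    set p := ‖P (Complex.exp (θ*Complex.I))‖
    have hre : (inner ℂ (R (Complex.exp (θ*Complex.I))) (P (Complex.exp (θ*Complex.I))) : ℂ).re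
        ≤ r * p := by
      refine (Complex.re_le_norm _).trans ?_
      exact norm_inner_le_norm _ _
    have h2cb : (0:ℝ) < 2*cb := by linarith
    have key2 : r*p ≤ (cb/2)*p^2 + (1/(2*cb))*r^2 := by
      rw [show (cb/2)*p^2 + (1/(2*cb))*r^2 = (cb^2*p^2 + r^2)/(2*cb) by field_simp]
      rw [le_div_iff₀ h2cb]
      nlinarith [sq_nonneg (r - cb*p)]
    simp only [hF1, hF2]
    linarith [hc, hre, key2]
  have hR2cont : Continuous fun θ : ℝ => ‖R (Complex.exp (θ*Complex.I))‖^2 :=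
    ((hRcont.comp ((Complex.continuous_ofReal.mul continuous_const).cexp)).norm.pow 2)
  have hi1 : IntervalIntegrable (fun θ => ‖F1 θ‖^2) volume 0 (2*Real.pi) :=
    (intervalIntegrable_iff_integrableOn_Ioc_of_le hpi.le).2 h1.1
  have hi2 : IntervalIntegrable (fun θ => ‖F2 θ‖^2) volume 0 (2*Real.pi) :=
    (intervalIntegrable_iff_integrableOn_Ioc_of_le hpi.le).2 h2.1
  have hi3 : IntervalIntegrable
      (fun θ => (1/(2*cb)) * ‖R (Complex.exp (θ*Complex.I))‖^2) volume 0 (2*Real.pi) :=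
    (continuous_const.mul hR2cont).intervalIntegrable _ _
  have hi12 : IntervalIntegrable
      (fun θ => (cb/2)*‖F1 θ‖^2 + (c0/τ)*‖F2 θ‖^2) volume 0 (2*Real.pi) :=
    ((hi1.const_mul _).add (hi2.const_mul _))
  have hle := intervalIntegral.integral_mono_on hpi.le hi12 hi3 (fun θ _ => hpt θ)
  rw [intervalIntegral.integral_add (hi1.const_mul _) (hi2.const_mul _),
    intervalIntegral.integral_const_mul, intervalIntegral.integral_const_mul,
    intervalIntegral.integral_const_mul] at hle
  have e1 : (∫ θ in (0:ℝ)..(2*Real.pi), ‖F1 θ‖^2)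
      = (2*Real.pi) * ∑' n, ‖Pc n‖^2 := by
    rw [intervalIntegral.integral_of_le hpi.le]; exact h1.2
  have e2 : (∫ θ in (0:ℝ)..(2*Real.pi), ‖F2 θ‖^2)
      = (2*Real.pi) * ∑' n, ‖Cop (Pc n)‖^2 := by
    rw [intervalIntegral.integral_of_le hpi.le]; exact h2.2
  rw [e1, e2] at hle
  have hfrac : (0:ℝ) < 1/(2*Real.pi) := by positivity
  have hmul := mul_le_mul_of_nonneg_left hle hfrac.le
  have eL : (1/(2*Real.pi))*((cb/2)*((2*Real.pi) * ∑' n, ‖Pc n‖^2)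
        + (c0/τ)*((2*Real.pi) * ∑' n, ‖Cop (Pc n)‖^2))
      = (cb/2) * ∑' n, ‖Pc n‖^2 + (c0/τ) * ∑' n, ‖Cop (Pc n)‖^2 := by
    field_simp
  have eR : (1/(2*Real.pi))*((1/(2*cb)) *
        ∫ θ in (0:ℝ)..(2*Real.pi), ‖R (Complex.exp (θ*Complex.I))‖^2)
      = (1/(2*cb)) * ((1/(2*Real.pi)) *
        ∫ θ in (0:ℝ)..(2*Real.pi), ‖R (Complex.exp (θ*Complex.I))‖^2) := by ring
  rw [eL, eR] at hmul
  exact hmul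
end
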